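/- arXiv:1208.3054 — 3 statements merged into one kernel-verified Lean document; each statement's English description precedes it below -/
import Mathlib

section
/- Let G = (V, E) be a finite simple connected undirected graph, L : V → ℕ a capacity function and k a positive integer, and suppose LP1 has a feasible solution (x, y). Then there exist a 5-feasible assignment (x', y') and a 21-caterpillar structure (P, P') for (x', y') such that every vertex v ∈ V \ (V(P) ∪ V(P')) has an integral y'-value, and the first and last elements of the sequence P' equal nil. -/
/-!
Pick a maximal set `S` of centers at pairwise distance at least `3` and send every vertex to a
nearest center.  Cells then have radius `2`, and the unit demand of a center is served inside its
own cell, so every cell carries opening mass at least `1`.  Inside each cell, refill that mass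
greedily by decreasing capacity: the capacity of the cell does not drop, its vertex of largest
capacity becomes fully open, and at most one vertex stays fractional.  Each cell goes on serving
the demand it served before, spread proportionally to the new capacities; this costs at most the
cell diameter `4` in distance.  Adjacent vertices have centers at distance at most `5`, so by
Sekanina's theorem the centers can be listed with consecutive ones at distance at most `15`.  The
fully open heads of the cells, in this order, form the spine (consecutive distance at most
`2 + 15 + 2`), and the fractional vertex of each cell hangs from its head.  Cell masses are
integral up to their fractional vertex and add up to `k`, so the leaves carry an integral total.
-/

/-- The LP relaxation LP1 of the capacitated `k`-center problem, at distance threshold `δ`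
(a `δ`-feasible assignment).  `x u v` is the (fractional) amount of client `v` assigned to
center `u`, and `y u` is the (fractional) opening of a center at `u`.  Distances larger
than `δ`, in particular between vertices in different connected components, forbid any
assignment. -/
def LPFeasible {V : Type} [Fintype V] (G : SimpleGraph V) (L : V → ℕ) (k δ : ℕ)
    (x : V → V → ℝ) (y : V → ℝ) : Prop :=
  (∀ u v, 0 ≤ x u v) ∧ (∀ u, 0 ≤ y u) ∧
  (∑ u, y u = (k : ℝ)) ∧
  (∀ u v, x u v ≤ y u) ∧
  (∀ u, ∑ v, x u v ≤ (L u : ℝ) * y u) ∧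
  (∀ v, ∑ u, x u v = 1) ∧
  (∀ u, y u ≤ 1) ∧
  (∀ u v, ¬ (G.Reachable u v ∧ G.dist u v ≤ δ) → x u v = 0)

/-- A (hard) capacitated `k`-center solution of `G` at distance `δ`: a set `S` of exactly
`k` centers and an assignment `φ` of every vertex to a center of `S` at distance at most
`δ`, such that at most `L u` vertices are assigned to each center `u`. -/
def HasCapSolution {V : Type} (G : SimpleGraph V) (L : V → ℕ) (k δ : ℕ) : Prop :=
  ∃ (S : Finset V) (φ : V → V), S.card = k ∧ (∀ v, φ v ∈ S) ∧
    (∀ v, G.Reachable v (φ v) ∧ G.dist v (φ v) ≤ δ) ∧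
    (∀ u ∈ S, {v | φ v = u}.ncard ≤ L u)

/-- The data of a caterpillar structure: a spine length `p`, spine vertices
`vtx 1, …, vtx p` (the sequence `P = (v_1, …, v_p)`) and leaves
`leaf 0, …, leaf (p+1)` (the sequence `P' = (v'_0, …, v'_{p+1})`, where `none` plays the
role of `nil`).  Values of `vtx`/`leaf` outside these index ranges are irrelevant. -/
structure Caterpillar (V : Type) where
  p : ℕ
  vtx : ℕ → V
  leaf : ℕ → Option V

/-- `V(P)`: the set of spine vertices of a caterpillar structure. -/
def Caterpillar.spine {V : Type} (C : Caterpillar V) : Set V :=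
  {w | ∃ i, 1 ≤ i ∧ i ≤ C.p ∧ C.vtx i = w}

/-- `V(P')`: the set of non-nil leaves of a caterpillar structure. -/
def Caterpillar.leaves {V : Type} (C : Caterpillar V) : Set V :=
  {w | ∃ i ≤ C.p + 1, C.leaf i = some w}

/-- `C` is a `δ`-caterpillar structure for the assignment with `y`-values `y`:
the spine vertices are distinct with `y`-value `1` and consecutive spine vertices are at
distance at most `δ`; leaves are vertices outside the spine with fractional `y`-values,
each leaf `leaf i` (`1 ≤ i ≤ p`) has `L (leaf i) ≤ L (vtx i)` and is at distance at most
`δ` from `vtx i`; `leaf 0` (resp. `leaf (p+1)`), if present, is at distance at most `δ`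
from `vtx 1` (resp. `vtx p`); the non-nil leaves are pairwise distinct; and the sum of the
`y`-values of the non-nil leaves is an integer. -/
def IsCaterpillar {V : Type} (G : SimpleGraph V) (L : V → ℕ) (y : V → ℝ) (δ : ℕ)
    (C : Caterpillar V) : Prop :=
  (∀ i j, 1 ≤ i → i < j → j ≤ C.p → C.vtx i ≠ C.vtx j) ∧
  (∀ i, 1 ≤ i → i ≤ C.p → y (C.vtx i) = 1) ∧
  (∀ i, 1 ≤ i → i + 1 ≤ C.p → G.dist (C.vtx i) (C.vtx (i + 1)) ≤ δ) ∧
  (∀ i ≤ C.p + 1, ∀ w, C.leaf i = some w → w ∉ C.spine) ∧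
  (∀ i, 1 ≤ i → i ≤ C.p → ∀ w, C.leaf i = some w →
      L w ≤ L (C.vtx i) ∧ 0 < y w ∧ y w < 1 ∧ G.dist (C.vtx i) w ≤ δ) ∧
  (∀ w, C.leaf 0 = some w → G.dist w (C.vtx 1) ≤ δ ∧ 0 < y w ∧ y w < 1) ∧
  (∀ w, C.leaf (C.p + 1) = some w → G.dist w (C.vtx C.p) ≤ δ ∧ 0 < y w ∧ y w < 1) ∧
  (∀ i j, i < j → j ≤ C.p + 1 → ∀ w w', C.leaf i = some w → C.leaf j = some w' → w ≠ w') ∧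
  (∃ n : ℤ, ∑ i ∈ Finset.range (C.p + 2), (C.leaf i).elim 0 y = (n : ℝ))

/-- `Γ(C)`: the set of spine vertices `vtx i` for which there are indices
`i₀ < i < i₁` with non-nil leaves `leaf i₀` and `leaf i₁` of capacity strictly larger than
`L (vtx i)`. -/
def Gamma {V : Type} (L : V → ℕ) (C : Caterpillar V) : Set V :=
  {w | ∃ i, 1 ≤ i ∧ i ≤ C.p ∧ C.vtx i = w ∧
    ∃ i₀ i₁, i₀ < i ∧ i < i₁ ∧ i₁ ≤ C.p + 1 ∧
      (∃ w₀, C.leaf i₀ = some w₀ ∧ L w < L w₀) ∧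
      (∃ w₁, C.leaf i₁ = some w₁ ∧ L w < L w₁)}

section GreedyFill

variable {V : Type} [DecidableEq V]

/-- Spread the mass `m` greedily along `l`: the `i`-th entry receives `m - i` clamped to
`[0, 1]`. -/
def greedyFill : List V → ℝ → V → ℝ
  | [], _ => 0
  | a :: l, m => Function.update (greedyFill l (m - 1)) a (max 0 (min m 1))

@[simp]
lemma greedyFill_cons_self (a : V) (l : List V) (m : ℝ) :
    greedyFill (a :: l) m a = max 0 (min m 1) :=
  Function.update_self ..

lemma greedyFill_cons_of_ne {a v : V} (h : v ≠ a) (l : List V) (m : ℝ) :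
    greedyFill (a :: l) m v = greedyFill l (m - 1) v :=
  Function.update_of_ne h ..

lemma greedyFill_nonneg (l : List V) (m : ℝ) (v : V) : 0 ≤ greedyFill l m v := by
  induction l generalizing m with
  | nil => exact le_rfl
  | cons a l ih =>
    by_cases h : v = a
    · subst h; simp
    · rw [greedyFill_cons_of_ne h]; exact ih _

lemma greedyFill_le_one (l : List V) (m : ℝ) (v : V) : greedyFill l m v ≤ 1 := by
  induction l generalizing m with
  | nil => exact zero_le_one
  | cons a l ih =>
    by_cases h : v = a
    · subst h; simp
    · rw [greedyFill_cons_of_ne h]; exact ih _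

lemma greedyFill_of_nonpos (l : List V) {m : ℝ} (hm : m ≤ 0) (v : V) :
    greedyFill l m v = 0 := by
  induction l generalizing m with
  | nil => rfl
  | cons a l ih =>
    by_cases h : v = a
    · subst h; simp [min_eq_left (hm.trans zero_le_one), hm]
    · rw [greedyFill_cons_of_ne h]; exact ih (by linarith)

lemma sum_greedyFill {l : List V} (hl : l.Nodup) (m : ℝ) :
    ∑ v ∈ l.toFinset, greedyFill l m v = max 0 (min m l.length) := by
  rw [List.sum_toFinset _ hl]
  induction l generalizing m with
  | nil => simp
  | cons a l ih =>
    obtain ⟨ha, hl⟩ := List.nodup_cons.1 hl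
    have htail : l.map (greedyFill (a :: l) m) = l.map (greedyFill l (m - 1)) :=
      List.map_congr_left fun v hv => greedyFill_cons_of_ne (ne_of_mem_of_not_mem hv ha) l m
    rw [List.map_cons, List.sum_cons, htail, ih hl, greedyFill_cons_self, List.length_cons]
    push_cast
    rcases le_total m 0 with h | h <;> rcases le_total m 1 with h' | h' <;>
      simp only [max_def, min_def] <;> split_ifs <;> linarith

lemma eq_of_greedyFill_mem_Ioo {l : List V} {m : ℝ} {v w : V}
    (hv : greedyFill l m v ∈ Set.Ioo 0 1) (hw : greedyFill l m w ∈ Set.Ioo 0 1) : v = w := by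
  induction l generalizing m with
  | nil => simp [greedyFill] at hv
  | cons a l ih =>
    have tail_zero : ∀ u, u ≠ a → greedyFill (a :: l) m a ∈ Set.Ioo 0 1 →
        greedyFill (a :: l) m u = 0 := by
      intro u hu ha
      rw [greedyFill_cons_of_ne hu]
      apply greedyFill_of_nonpos
      rcases le_total m 1 with h | h
      · linarith
      · simp [min_eq_right h] at ha
    by_cases hva : v = a <;> by_cases hwa : w = a
    · rw [hva, hwa]
    · subst hva; simp [tail_zero w hwa hv] at hw
    · subst hwa; simp [tail_zero v hva hw] at hv
    · rw [greedyFill_cons_of_ne hva] at hv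
      rw [greedyFill_cons_of_ne hwa] at hw
      exact ih hv hw

lemma le_of_greedyFill {β : Type*} [Preorder β] {c : V → β} {l : List V}
    (hl : l.Pairwise fun a b => c b ≤ c a) {m : ℝ} {v w : V} (hw : w ∈ l) (hv : 0 < greedyFill l m v) (hw1 : greedyFill l m w < 1) :
    c w ≤ c v := by
  induction l generalizing m with
  | nil => simp at hw
  | cons a l ih =>
    obtain ⟨ha, hl⟩ := List.pairwise_cons.1 hl
    by_cases hva : v = a
    · subst hva
      rcases List.mem_cons.1 hw with rfl | hw
      · exact le_rfl
      · exact ha w hw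
    · rw [greedyFill_cons_of_ne hva] at hv
      have hm : 1 < m := by
        by_contra! h
        exact hv.ne' (greedyFill_of_nonpos l (by linarith) v)
      have hwa : w ≠ a := by
        rintro rfl
        simp [min_eq_right hm.le] at hw1
      rw [greedyFill_cons_of_ne hwa] at hw1
      exact ih hl (List.mem_of_ne_of_mem hwa hw) hv hw1

end GreedyFill

section sortDesc

variable {V : Type} {β : Type*} [LinearOrder β] (c : V → β) (s : Finset V)

noncomputable def sortDesc : List V :=
  s.toList.mergeSort fun a b => decide (c b ≤ c a)

lemma sortDesc_perm : (sortDesc c s).Perm s.toList := List.mergeSort_perm ..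

lemma sortDesc_nodup : (sortDesc c s).Nodup :=
  (sortDesc_perm c s).nodup_iff.2 s.nodup_toList

lemma length_sortDesc : (sortDesc c s).length = s.card :=
  (sortDesc_perm c s).length_eq.trans s.length_toList

@[simp]
lemma mem_sortDesc {v : V} : v ∈ sortDesc c s ↔ v ∈ s :=
  (sortDesc_perm c s).mem_iff.trans Finset.mem_toList

@[simp]
lemma toFinset_sortDesc [DecidableEq V] : (sortDesc c s).toFinset = s := by
  ext; simp

lemma pairwise_sortDesc : (sortDesc c s).Pairwise fun a b => c b ≤ c a :=
  (List.pairwise_mergeSort (le := fun a b => decide (c b ≤ c a))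
    (fun _ _ _ hab hbc => by simp only [decide_eq_true_eq] at *; exact hbc.trans hab)
    (fun a b => by simpa using le_total (c b) (c a)) s.toList).imp of_decide_eq_true

end sortDesc

/-- Exchange argument: if `t` is the largest weight on which `g' > g`, every term
`(c v - t) * (g v - g' v)` is nonnegative, and these terms add up to the difference. -/
lemma sum_mul_le_sum_mul_of_threshold {V : Type} (s : Finset V) {c g g' : V → ℝ}
    (hsum : ∑ v ∈ s, g' v = ∑ v ∈ s, g v)
    (hg'0 : ∀ v ∈ s, 0 ≤ g' v) (hg'1 : ∀ v ∈ s, g' v ≤ 1)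
    (hc : ∀ v ∈ s, ∀ w ∈ s, 0 < g v → g w < 1 → c w ≤ c v) :
    ∑ v ∈ s, c v * g' v ≤ ∑ v ∈ s, c v * g v := by
  classical
  suffices ∃ t : ℝ, ∀ v ∈ s, 0 ≤ (c v - t) * (g v - g' v) by
    obtain ⟨t, ht⟩ := this
    have hexpand : ∑ v ∈ s, (c v - t) * (g v - g' v)
        = ∑ v ∈ s, c v * g v - ∑ v ∈ s, c v * g' v - t * (∑ v ∈ s, g v - ∑ v ∈ s, g' v) := by
      simp only [sub_mul, mul_sub, Finset.sum_sub_distrib, Finset.mul_sum]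
      ring
    rw [hsum, sub_self, mul_zero, sub_zero] at hexpand
    linarith [Finset.sum_nonneg ht]
  rcases (s.filter fun v => g v < g' v).eq_empty_or_nonempty with hB | hB
  · have hle : ∀ v ∈ s, 0 ≤ g v - g' v := fun v hv => by
      have : v ∉ s.filter fun v => g v < g' v := by simp [hB]
      simp only [Finset.mem_filter, not_and, not_lt] at this
      linarith [this hv]
    have heq := (Finset.sum_eq_zero_iff_of_nonneg hle).1 (by
      rw [Finset.sum_sub_distrib, hsum, sub_self])
    exact ⟨0, fun v hv => by rw [heq v hv, mul_zero]⟩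
  · obtain ⟨u, hu, hmax⟩ := (s.filter fun v => g v < g' v).exists_max_image c hB
    obtain ⟨hus, hu⟩ := Finset.mem_filter.1 hu
    refine ⟨c u, fun v hv => ?_⟩
    rcases lt_trichotomy (g v) (g' v) with hlt | heq | hgt
    · have := hmax v (Finset.mem_filter.2 ⟨hv, hlt⟩)
      nlinarith
    · simp [heq]
    · have := hc v hv u hus (by linarith [hg'0 v hv]) (by linarith [hg'1 u hus])
      nlinarith

section CubePath

open Relation

variable {α : Type*} (R : α → α → Prop)

def RelOn (S : Finset α) (p q : α) : Prop := p ∈ S ∧ q ∈ S ∧ R p q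

instance [Std.Symm R] (S : Finset α) : Std.Symm (RelOn R S) :=
  ⟨fun _ _ ⟨hp, hq, h⟩ => ⟨hq, hp, Std.Symm.symm _ _ h⟩⟩

def RelConnectedOn (S : Finset α) : Prop :=
  ∀ a ∈ S, ∀ b ∈ S, ReflTransGen (RelOn R S) a b

open Classical in
noncomputable def relComponent (T : Finset α) (z : α) : Finset α :=
  T.filter (ReflTransGen (RelOn R T) z)

variable {R}

lemma mem_relComponent {T : Finset α} {z a : α} :
    a ∈ relComponent R T z ↔ a ∈ T ∧ ReflTransGen (RelOn R T) z a := by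
  classical
  simp [relComponent]

lemma reflTransGen_relComponent {T : Finset α} {z a b : α} (ha : a ∈ relComponent R T z)
    (hab : ReflTransGen (RelOn R T) a b) :
    b ∈ relComponent R T z ∧ ReflTransGen (RelOn R (relComponent R T z)) a b := by
  induction hab with
  | refl => exact ⟨ha, .refl⟩
  | tail _ hcb ih =>
    obtain ⟨hc, hac⟩ := ih
    have hb := mem_relComponent.2 ⟨hcb.2.1, (mem_relComponent.1 hc).2.tail hcb⟩
    exact ⟨hb, hac.tail ⟨hc, hb, hcb.2.2⟩⟩

lemma relConnectedOn_relComponent [Std.Symm R] (T : Finset α) (z : α) :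
    RelConnectedOn R (relComponent R T z) := fun _ ha _ hb =>
  (reflTransGen_relComponent ha
    ((Std.Symm.symm _ _ (mem_relComponent.1 ha).2).trans (mem_relComponent.1 hb).2)).2

variable [DecidableEq α]

/-- A path from outside the component to `r` never enters it. -/
lemma RelConnectedOn.sdiff_relComponent [Std.Symm R] {S : Finset α} (hS : RelConnectedOn R S)
    {r : α} (hr : r ∈ S) (z : α) :
    RelConnectedOn R (S \ relComponent R (S.erase r) z) := by
  set C := relComponent R (S.erase r) z
  suffices to_root : ∀ a ∈ S \ C, ReflTransGen (RelOn R (S \ C)) a r from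
    fun a ha b hb => (to_root a ha).trans (Std.Symm.symm _ _ (to_root b hb))
  intro a ha
  induction hS a (Finset.mem_sdiff.1 ha).1 r hr using ReflTransGen.head_induction_on with
  | refl => exact .refl
  | @head a c hac _ ih =>
    by_cases har : a = r
    · rw [har]
    by_cases hc : c ∈ C
    · refine absurd ?_ (Finset.mem_sdiff.1 ha).2
      exact (reflTransGen_relComponent hc (.single ⟨(mem_relComponent.1 hc).1,
        Finset.mem_erase.2 ⟨har, hac.1⟩, Std.Symm.symm _ _ hac.2.2⟩)).1
    · have hc' : c ∈ S \ C := Finset.mem_sdiff.2 ⟨hac.2.1, hc⟩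
      exact .head ⟨ha, hc', hac.2.2⟩ (ih hc')

lemma RelConnectedOn.exists_rel_of_ne [Std.Symm R] {S : Finset α} (hS : RelConnectedOn R S)
    {r a : α} (hr : r ∈ S) (ha : a ∈ S) (har : a ≠ r) : ∃ z ∈ S.erase r, R r z := by
  by_contra! hno
  suffices ∀ b, ReflTransGen (RelOn R S) a b → b ≠ r from this r (hS a ha r hr) rfl
  intro b hab
  induction hab with
  | refl => exact har
  | @tail c b _ hcb ih =>
    rintro rfl
    exact hno c (Finset.mem_erase.2 ⟨ih, hcb.1⟩) (Std.Symm.symm _ _ hcb.2.2)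

/-- Sekanina: the cube of a connected graph has a Hamiltonian path.  Ending next to `r` is what
lets the induction glue the paths of the component through a neighbour `z` of `r` and of the
rest as `l₂ ++ l₁.reverse`. -/
theorem RelConnectedOn.exists_cube_path [Std.Refl R] [Std.Symm R] {S : Finset α} {r : α}
    (hr : r ∈ S) (hS : RelConnectedOn R S) :
    ∃ l : List α, l.head? = some r ∧ l.Nodup ∧ l.toFinset = S ∧
      l.IsChain (fun a b => ∃ c d, R a c ∧ R c d ∧ R d b) ∧ ∀ e ∈ l.getLast?, R r e := by
  induction S using Finset.strongInduction generalizing r with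
  | H S ih =>
  rcases (S.erase r).eq_empty_or_nonempty with hSr | ⟨a, ha⟩
  · refine ⟨[r], rfl, List.nodup_singleton r, ?_, List.isChain_singleton r, ?_⟩
    · rw [List.toFinset_cons, List.toFinset_nil, insert_empty_eq, ← Finset.insert_erase hr,
        hSr, insert_empty_eq]
    · simpa using Std.Refl.refl r
  obtain ⟨z, hz, hrz⟩ := hS.exists_rel_of_ne hr (Finset.mem_of_mem_erase ha)
    (Finset.ne_of_mem_erase ha)
  set C := relComponent R (S.erase r) z
  have hzC : z ∈ C := mem_relComponent.2 ⟨hz, .refl⟩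
  have hCS : C ⊆ S.erase r := fun _ h => (mem_relComponent.1 h).1
  have hrC : r ∉ C := fun h => by simpa using hCS h
  obtain ⟨l₁, h₁head, h₁nd, h₁S, h₁chain, h₁last⟩ :=
    ih C ((Finset.ssubset_iff_of_subset (hCS.trans (S.erase_subset r))).2 ⟨r, hr, hrC⟩) hzC
      (relConnectedOn_relComponent _ _)
  obtain ⟨l₂, h₂head, h₂nd, h₂S, h₂chain, h₂last⟩ :=
    ih (S \ C) (Finset.sdiff_ssubset (hCS.trans (S.erase_subset r)) ⟨z, hzC⟩)
      (Finset.mem_sdiff.2 ⟨hr, hrC⟩) (hS.sdiff_relComponent hr z)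
  refine ⟨l₂ ++ l₁.reverse, ?_, ?_, ?_, ?_, ?_⟩
  · simp [List.head?_append, h₂head]
  · refine h₂nd.append (List.nodup_reverse.2 h₁nd) fun x hx₂ hx₁ => ?_
    have hx₂ : x ∈ S \ C := h₂S ▸ List.mem_toFinset.2 hx₂
    exact (Finset.mem_sdiff.1 hx₂).2 (h₁S ▸ List.mem_toFinset.2 (List.mem_reverse.1 hx₁))
  · rw [List.toFinset_append, List.toFinset_reverse, h₂S, h₁S]
    exact Finset.sdiff_union_of_subset (hCS.trans (S.erase_subset r))
  · refine List.isChain_append.2 ⟨h₂chain, List.isChain_reverse.2 ?_, ?_⟩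
    · exact h₁chain.imp fun a b ⟨c, d, hac, hcd, hdb⟩ =>
        ⟨d, c, Std.Symm.symm _ _ hdb, Std.Symm.symm _ _ hcd, Std.Symm.symm _ _ hac⟩
    · intro x hx y hy
      rw [List.head?_reverse] at hy
      exact ⟨r, z, Std.Symm.symm _ _ (h₂last x hx), hrz, h₁last y hy⟩
  · intro e he
    rw [List.getLast?_append, List.getLast?_reverse, h₁head] at he
    simp only [Option.some_or, Option.mem_def, Option.some.injEq] at he
    exact he ▸ hrz

end CubePath

section Clustering

variable {V : Type} (G : SimpleGraph V)

lemma exists_separated_cover [Fintype V] [Nonempty V] :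
    ∃ S : Finset V, (∀ a ∈ S, ∀ b ∈ S, a ≠ b → 3 ≤ G.dist a b) ∧
      ∀ v, ∃ s ∈ S, G.dist v s ≤ 2 := by
  classical
  let F : Finset (Finset V) :=
    Finset.univ.filter fun T => ∀ a ∈ T, ∀ b ∈ T, a ≠ b → 3 ≤ G.dist a b
  obtain ⟨v₀⟩ := ‹Nonempty V›
  have hv₀ : {v₀} ∈ F := by simp +contextual [F]
  obtain ⟨S, hSF, hSmax⟩ := F.exists_max_image Finset.card ⟨_, hv₀⟩
  have hS := (Finset.mem_filter.1 hSF).2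
  refine ⟨S, hS, fun v => ?_⟩
  by_contra! hfar
  have hvS : v ∉ S := fun hv => by simpa using hfar v hv
  have hins : insert v S ∈ F := by
    simp only [F, Finset.mem_filter, Finset.mem_univ, Finset.mem_insert, true_and]
    rintro a (rfl | ha) b (rfl | hb) hab
    · exact absurd rfl hab
    · exact hfar b hb
    · exact G.dist_comm ▸ hfar a ha
    · exact hS a ha b hb hab
  have := hSmax _ hins
  rw [Finset.card_insert_of_notMem hvS] at this
  omega

structure IsClustering (S : Finset V) (ctr : V → V) : Prop where
  ctr_mem : ∀ v, ctr v ∈ S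
  dist_ctr_le : ∀ v, G.dist v (ctr v) ≤ 2
  ctr_eq_of_dist_le_one : ∀ v, ∀ s ∈ S, G.dist v s ≤ 1 → ctr v = s

variable {G}

/-- Send every vertex to a nearest center of a maximal `3`-separated set. -/
lemma SimpleGraph.Connected.exists_isClustering [Fintype V] (hG : G.Connected) :
    ∃ S ctr, IsClustering G S ctr := by
  have := hG.nonempty
  obtain ⟨S, hsep, hcov⟩ := exists_separated_cover G
  have hnear : ∀ v, ∃ s ∈ S, ∀ s' ∈ S, G.dist v s ≤ G.dist v s' := fun v =>
    S.exists_min_image (G.dist v) (let ⟨s, hs, _⟩ := hcov v; ⟨s, hs⟩)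
  choose ctr hctrS hctrmin using hnear
  refine ⟨S, ctr, hctrS, fun v => ?_, fun v s hs hvs => ?_⟩
  · obtain ⟨s, hs, hvs⟩ := hcov v
    exact (hctrmin v s hs).trans hvs
  · by_contra hne
    have := hsep _ (hctrS v) s hs hne
    have := hctrmin v s hs
    have := hG.dist_triangle (u := ctr v) (v := v) (w := s)
    rw [G.dist_comm (u := ctr v) (v := v)] at this
    omega

variable {S : Finset V} {ctr : V → V}

lemma IsClustering.ctr_self (hC : IsClustering G S ctr) {s : V} (hs : s ∈ S) : ctr s = s :=
  hC.ctr_eq_of_dist_le_one s s hs (by simp)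

lemma IsClustering.dist_le_four (hC : IsClustering G S ctr) (hG : G.Connected) {u w : V}
    (h : ctr u = ctr w) : G.dist u w ≤ 4 := by
  have := hG.dist_triangle (u := u) (v := ctr u) (w := w)
  rw [h, G.dist_comm (u := ctr w)] at this
  linarith [hC.dist_ctr_le u, hC.dist_ctr_le w, h ▸ hC.dist_ctr_le u]

lemma IsClustering.dist_ctr_le_five (hC : IsClustering G S ctr) (hG : G.Connected) {a b : V}
    (hab : G.Adj a b) : G.dist (ctr a) (ctr b) ≤ 5 := by
  have h₁ := hG.dist_triangle (u := ctr a) (v := a) (w := ctr b)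
  have h₂ := hG.dist_triangle (u := a) (v := b) (w := ctr b)
  have h₃ : G.dist a b ≤ 1 := by simpa using SimpleGraph.dist_le hab.toWalk
  rw [G.dist_comm (u := ctr a) (v := a)] at h₁
  linarith [hC.dist_ctr_le a, hC.dist_ctr_le b]

lemma IsClustering.relConnectedOn (hC : IsClustering G S ctr) (hG : G.Connected) :
    RelConnectedOn (fun a b => G.dist a b ≤ 5) S := by
  have hwalk : ∀ a b (p : G.Walk a b),
      Relation.ReflTransGen (RelOn (fun a b => G.dist a b ≤ 5) S) (ctr a) (ctr b) := by
    intro a b p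
    induction p with
    | nil => exact .refl
    | cons hadj _ ih =>
      exact .head ⟨hC.ctr_mem _, hC.ctr_mem _, hC.dist_ctr_le_five hG hadj⟩ ih
  intro a ha b hb
  simpa [hC.ctr_self ha, hC.ctr_self hb] using hwalk a b (hG.preconnected a b).some

lemma IsClustering.exists_list [DecidableEq V] (hC : IsClustering G S ctr) (hG : G.Connected) :
    ∃ l : List V, l.Nodup ∧ l.toFinset = S ∧ l.IsChain fun a b => G.dist a b ≤ 15 := by
  have : Std.Refl fun a b : V => G.dist a b ≤ 5 := ⟨fun a => by simp⟩
  have : Std.Symm fun a b : V => G.dist a b ≤ 5 := ⟨fun a b h => G.dist_comm ▸ h⟩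
  obtain ⟨l, -, hnd, hlS, hchain, -⟩ :=
    (hC.relConnectedOn hG).exists_cube_path (hC.ctr_mem hG.nonempty.some)
  refine ⟨l, hnd, hlS, hchain.imp fun a b ⟨c, d, hac, hcd, hdb⟩ => ?_⟩
  linarith [hG.dist_triangle (u := a) (v := c) (w := b),
    hG.dist_triangle (u := c) (v := d) (w := b)]

end Clustering

section Cells

variable {V : Type} [Fintype V] [DecidableEq V] (ctr : V → V)

def cell (s : V) : Finset V := {v | ctr v = s}

def cellSum (f : V → ℝ) (s : V) : ℝ := ∑ v ∈ cell ctr s, f v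

variable {ctr}

@[simp]
lemma mem_cell {s v : V} : v ∈ cell ctr s ↔ ctr v = s := by simp [cell]

lemma sum_univ_cellSum (f : V → ℝ) : ∑ s, cellSum ctr f s = ∑ v, f v :=
  Finset.sum_fiberwise _ ctr f

lemma cellSum_congr {f g : V → ℝ} {s : V} (h : ∀ v, ctr v = s → f v = g v) :
    cellSum ctr f s = cellSum ctr g s :=
  Finset.sum_congr rfl fun v hv => h v (mem_cell.1 hv)

/-- A center's unit of demand is served from distance at most `1`, hence from its own cell. -/
lemma IsClustering.one_le_cellSum {G : SimpleGraph V} {S : Finset V} (hC : IsClustering G S ctr)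
    {L : V → ℕ} {k : ℕ} {x : V → V → ℝ} {y : V → ℝ} (hfeas : LPFeasible G L k 1 x y) {s : V}
    (hs : s ∈ S) : 1 ≤ cellSum ctr y s := by
  obtain ⟨-, -, -, hxy, -, hdem, -, hdist⟩ := hfeas
  have hout : ∀ u ∈ Finset.univ, u ∉ cell ctr s → x u s = 0 := fun u _ hu =>
    hdist u s fun h => hu (mem_cell.2 (hC.ctr_eq_of_dist_le_one u s hs h.2))
  calc 1 = ∑ u ∈ cell ctr s, x u s := by
        rw [Finset.sum_subset (Finset.subset_univ _) hout, hdem]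
    _ ≤ cellSum ctr y s := Finset.sum_le_sum fun u _ => hxy u s

end Cells

section Rounding

variable {V : Type} [Fintype V] [DecidableEq V] (L : V → ℕ) (ctr : V → V) (y : V → ℝ)

noncomputable def roundedOpening (v : V) : ℝ :=
  greedyFill (sortDesc L (cell ctr (ctr v))) (cellSum ctr y (ctr v)) v

noncomputable def cellHead (s : V) : V := (sortDesc L (cell ctr s)).headD s

variable {L ctr y}

lemma roundedOpening_of_ctr_eq {v s : V} (h : ctr v = s) :
    roundedOpening L ctr y v = greedyFill (sortDesc L (cell ctr s)) (cellSum ctr y s) v := by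
  subst h; rfl

lemma roundedOpening_nonneg (v : V) : 0 ≤ roundedOpening L ctr y v := greedyFill_nonneg ..

lemma roundedOpening_le_one (v : V) : roundedOpening L ctr y v ≤ 1 := greedyFill_le_one ..

lemma cellSum_roundedOpening (hy0 : ∀ v, 0 ≤ y v) (hy1 : ∀ v, y v ≤ 1) (s : V) :
    cellSum ctr (roundedOpening L ctr y) s = cellSum ctr y s := by
  have hm0 : 0 ≤ cellSum ctr y s := Finset.sum_nonneg fun v _ => hy0 v
  have hm1 : cellSum ctr y s ≤ (cell ctr s).card := by
    simpa [cellSum] using Finset.sum_le_sum fun v (_ : v ∈ cell ctr s) => hy1 v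
  have h := sum_greedyFill (sortDesc_nodup L (cell ctr s)) (cellSum ctr y s)
  rw [toFinset_sortDesc, length_sortDesc, min_eq_left hm1, max_eq_right hm0] at h
  rw [cellSum_congr fun v => roundedOpening_of_ctr_eq, cellSum, h]

lemma sum_roundedOpening (hy0 : ∀ v, 0 ≤ y v) (hy1 : ∀ v, y v ≤ 1) :
    ∑ v, roundedOpening L ctr y v = ∑ v, y v := by
  rw [← sum_univ_cellSum (ctr := ctr), ← sum_univ_cellSum (ctr := ctr) y]
  exact Finset.sum_congr rfl fun s _ => cellSum_roundedOpening hy0 hy1 s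

lemma cellSum_mul_le_roundedOpening (hy0 : ∀ v, 0 ≤ y v) (hy1 : ∀ v, y v ≤ 1) (s : V) :
    cellSum ctr (fun v => L v * y v) s ≤
      cellSum ctr (fun v => L v * roundedOpening L ctr y v) s := by
  have hs : ∀ v ∈ cell ctr s, roundedOpening L ctr y v
      = greedyFill (sortDesc L (cell ctr s)) (cellSum ctr y s) v :=
    fun v hv => roundedOpening_of_ctr_eq (mem_cell.1 hv)
  refine sum_mul_le_sum_mul_of_threshold _ ?_ (fun v _ => hy0 v) (fun v _ => hy1 v) ?_
  · rw [← cellSum, ← cellSum_roundedOpening hy0 hy1 s]; rfl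
  · intro v hv w hw h0 h1
    rw [hs v hv] at h0
    rw [hs w hw] at h1
    exact_mod_cast le_of_greedyFill (pairwise_sortDesc L _) ((mem_sortDesc _ _).2 hw) h0 h1

lemma eq_of_roundedOpening_mem_Ioo {v w : V} (h : ctr v = ctr w)
    (hv : roundedOpening L ctr y v ∈ Set.Ioo 0 1) (hw : roundedOpening L ctr y w ∈ Set.Ioo 0 1) :
    v = w := by
  rw [roundedOpening_of_ctr_eq h] at hv
  rw [roundedOpening_of_ctr_eq rfl] at hw
  exact eq_of_greedyFill_mem_Ioo hv hw

lemma sortDesc_cell_eq_cellHead_cons {s : V} (hs : ctr s = s) :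
    ∃ t, sortDesc L (cell ctr s) = cellHead L ctr s :: t := by
  have hmem : s ∈ sortDesc L (cell ctr s) := (mem_sortDesc _ _).2 (mem_cell.2 hs)
  obtain ⟨a, t, h⟩ := List.exists_cons_of_ne_nil (List.ne_nil_of_mem hmem)
  exact ⟨t, by rw [cellHead, h, List.headD_cons]⟩

lemma ctr_cellHead {s : V} (hs : ctr s = s) : ctr (cellHead L ctr s) = s := by
  obtain ⟨t, ht⟩ := sortDesc_cell_eq_cellHead_cons (L := L) hs
  exact mem_cell.1 ((mem_sortDesc _ _).1 (ht ▸ List.mem_cons_self))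

lemma le_cellHead {s v : V} (hs : ctr s = s) (hv : ctr v = s) : L v ≤ L (cellHead L ctr s) := by
  obtain ⟨t, ht⟩ := sortDesc_cell_eq_cellHead_cons (L := L) hs
  have hvl : v ∈ cellHead L ctr s :: t := ht ▸ (mem_sortDesc _ _).2 (mem_cell.2 hv)
  have hsorted := ht ▸ pairwise_sortDesc L (cell ctr s)
  rcases List.mem_cons.1 hvl with rfl | hvt
  · exact le_rfl
  · exact (List.pairwise_cons.1 hsorted).1 v hvt

lemma roundedOpening_cellHead {s : V} (hs : ctr s = s) (h1 : 1 ≤ cellSum ctr y s) :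
    roundedOpening L ctr y (cellHead L ctr s) = 1 := by
  obtain ⟨t, ht⟩ := sortDesc_cell_eq_cellHead_cons (L := L) hs
  rw [roundedOpening_of_ctr_eq (ctr_cellHead hs), ht, greedyFill_cons_self, min_eq_right h1]
  norm_num

lemma le_cellSum_mul_roundedOpening {s v : V} (hs : ctr s = s) (h1 : 1 ≤ cellSum ctr y s)
    (hv : ctr v = s) : (L v : ℝ) ≤ cellSum ctr (fun w => L w * roundedOpening L ctr y w) s := by
  have hhead :
      (L (cellHead L ctr s) : ℝ) ≤ cellSum ctr (fun w => L w * roundedOpening L ctr y w) s := by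
    simpa [cellSum, roundedOpening_cellHead hs h1] using Finset.single_le_sum
      (f := fun w => (L w : ℝ) * roundedOpening L ctr y w)
      (fun w _ => mul_nonneg (Nat.cast_nonneg _) (roundedOpening_nonneg w))
      (mem_cell.2 (ctr_cellHead (L := L) hs))
  exact le_trans (by exact_mod_cast le_cellHead hs hv) hhead

end Rounding

section Reassign

variable {V : Type} [Fintype V] [DecidableEq V] (ctr : V → V) (L : V → ℕ)

/-- Each cell keeps serving the demand it served under `x`, now shared among its vertices in
proportion to their capacities `L u * y' u`.  When the cell's total is `0` the quotient is
`0` (division by zero); such a cell served nothing under `x` either. -/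
noncomputable def reassign (x : V → V → ℝ) (y' : V → ℝ) (u v : V) : ℝ :=
  cellSum ctr (fun w => x w v) (ctr u) * (L u * y' u) / cellSum ctr (fun w => L w * y' w) (ctr u)

variable {ctr L} {x : V → V → ℝ} {y y' : V → ℝ}

lemma cellSum_le_one (hx0 : ∀ u v, 0 ≤ x u v) (hdem : ∀ v, ∑ u, x u v = 1) (s v : V) :
    cellSum ctr (fun w => x w v) s ≤ 1 :=
  hdem v ▸ Finset.sum_le_univ_sum_of_nonneg fun w => hx0 w v

lemma sum_cellSum_le (hxcap : ∀ u, ∑ v, x u v ≤ L u * y u)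
    (hcap : ∀ s, cellSum ctr (fun w => L w * y w) s ≤ cellSum ctr (fun w => L w * y' w) s)
    (s : V) :
    ∑ v, cellSum ctr (fun w => x w v) s ≤ cellSum ctr (fun w => L w * y' w) s :=
  calc ∑ v, cellSum ctr (fun w => x w v) s = ∑ w ∈ cell ctr s, ∑ v, x w v := Finset.sum_comm
    _ ≤ cellSum ctr (fun w => L w * y w) s := Finset.sum_le_sum fun w _ => hxcap w
    _ ≤ _ := hcap s

lemma reassign_nonneg (hx0 : ∀ u v, 0 ≤ x u v) (hy'0 : ∀ u, 0 ≤ y' u) (u v : V) :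
    0 ≤ reassign ctr L x y' u v := by
  unfold reassign cellSum
  have := hy'0 u
  refine div_nonneg (mul_nonneg (Finset.sum_nonneg fun w _ => hx0 w v) (by positivity)) ?_
  exact Finset.sum_nonneg fun w _ => mul_nonneg (Nat.cast_nonneg _) (hy'0 w)

lemma reassign_le (hx0 : ∀ u v, 0 ≤ x u v) (hdem : ∀ v, ∑ u, x u v = 1) (hy'0 : ∀ u, 0 ≤ y' u)
    (hL : ∀ u, (L u : ℝ) ≤ cellSum ctr (fun w => L w * y' w) (ctr u)) (u v : V) :
    reassign ctr L x y' u v ≤ y' u := by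
  unfold reassign
  set d := cellSum ctr (fun w => x w v) (ctr u)
  set c := cellSum ctr (fun w => L w * y' w) (ctr u)
  have hd0 : 0 ≤ d := Finset.sum_nonneg fun w _ => hx0 w v
  have hd1 : d ≤ 1 := cellSum_le_one hx0 hdem _ v
  have hLc : (L u : ℝ) ≤ c := hL u
  rcases (hLc.trans' (Nat.cast_nonneg _)).eq_or_lt with hc | hc
  · rw [← hc, div_zero]; exact hy'0 u
  · rw [div_le_iff₀ hc]
    have := hy'0 u
    have : 0 ≤ (L u : ℝ) * y' u := by positivity
    nlinarith

lemma sum_reassign_le (hx0 : ∀ u v, 0 ≤ x u v) (hxcap : ∀ u, ∑ v, x u v ≤ L u * y u)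
    (hy'0 : ∀ u, 0 ≤ y' u)
    (hcap : ∀ s, cellSum ctr (fun w => L w * y w) s ≤ cellSum ctr (fun w => L w * y' w) s)
    (u : V) : ∑ v, reassign ctr L x y' u v ≤ L u * y' u := by
  unfold reassign
  rw [← Finset.sum_div, ← Finset.sum_mul]
  have := hy'0 u
  have hD := sum_cellSum_le hxcap hcap (ctr u)
  have hD0 : 0 ≤ ∑ v, cellSum ctr (fun w => x w v) (ctr u) :=
    Finset.sum_nonneg fun v _ => Finset.sum_nonneg fun w _ => hx0 w v
  rcases (hD0.trans hD).eq_or_lt with hc | hc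
  · rw [← hc, div_zero]; positivity
  · rw [div_le_iff₀ hc]
    have : 0 ≤ (L u : ℝ) * y' u := by positivity
    nlinarith

lemma sum_reassign (hx0 : ∀ u v, 0 ≤ x u v) (hxcap : ∀ u, ∑ v, x u v ≤ L u * y u)
    (hdem : ∀ v, ∑ u, x u v = 1)
    (hcap : ∀ s, cellSum ctr (fun w => L w * y w) s ≤ cellSum ctr (fun w => L w * y' w) s)
    (v : V) : ∑ u, reassign ctr L x y' u v = 1 := by
  suffices hcell : ∀ s, cellSum ctr (fun u => reassign ctr L x y' u v) s
      = cellSum ctr (fun w => x w v) s by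
    rw [← sum_univ_cellSum, Finset.sum_congr rfl fun s _ => hcell s, sum_univ_cellSum, hdem]
  intro s
  rw [cellSum_congr (g := fun u => cellSum ctr (fun w => x w v) s * (L u * y' u) /
    cellSum ctr (fun w => L w * y' w) s) fun u hu => by rw [reassign, hu]]
  unfold cellSum
  rw [← Finset.sum_div, ← Finset.mul_sum]
  by_cases hc : ∑ w ∈ cell ctr s, (L w : ℝ) * y' w = 0
  · have hD := sum_cellSum_le hxcap hcap s
    unfold cellSum at hD
    rw [hc] at hD
    have hzero := (Finset.sum_eq_zero_iff_of_nonneg fun v _ =>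
      Finset.sum_nonneg fun w _ => hx0 w v).1
      (le_antisymm hD (Finset.sum_nonneg fun v _ => Finset.sum_nonneg fun w _ => hx0 w v))
    rw [hc, div_zero, hzero v (Finset.mem_univ v)]
  · exact mul_div_cancel_right₀ _ hc

lemma exists_ne_zero_of_reassign_ne_zero {u v : V} (h : reassign ctr L x y' u v ≠ 0) :
    ∃ w, ctr w = ctr u ∧ x w v ≠ 0 := by
  have hd : cellSum ctr (fun w => x w v) (ctr u) ≠ 0 := fun hd => h (by simp [reassign, hd])
  obtain ⟨w, hw, hxw⟩ := Finset.exists_ne_zero_of_sum_ne_zero hd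
  exact ⟨w, mem_cell.1 hw, hxw⟩

theorem LPFeasible.reassign {G : SimpleGraph V} (hG : G.Connected) {k δ D : ℕ}
    (hfeas : LPFeasible G L k δ x y) (hy'0 : ∀ u, 0 ≤ y' u) (hy'1 : ∀ u, y' u ≤ 1)
    (hy'sum : ∑ u, y' u = k)
    (hcap : ∀ s, cellSum ctr (fun w => L w * y w) s ≤ cellSum ctr (fun w => L w * y' w) s)
    (hL : ∀ u, (L u : ℝ) ≤ cellSum ctr (fun w => L w * y' w) (ctr u))
    (hdiam : ∀ u w, ctr u = ctr w → G.dist u w ≤ D) :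
    LPFeasible G L k (D + δ) (reassign ctr L x y') y' := by
  obtain ⟨hx0, -, -, -, hxcap, hdem, -, hdist⟩ := hfeas
  refine ⟨reassign_nonneg hx0 hy'0, hy'0, hy'sum, reassign_le hx0 hdem hy'0 hL,
    sum_reassign_le hx0 hxcap hy'0 hcap, sum_reassign hx0 hxcap hdem hcap, hy'1,
    fun u v huv => by_contra fun h => huv ⟨hG.preconnected u v, ?_⟩⟩
  obtain ⟨w, hw, hxw⟩ := exists_ne_zero_of_reassign_ne_zero h
  have hwv := (not_not.1 (mt (hdist w v) hxw)).2
  linarith [hG.dist_triangle (u := u) (v := w) (w := v), hdiam u w hw.symm]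

end Reassign

section CaterpillarOf

variable {V : Type} (rep : V → V) (leafOf : V → Option V) (l : List V) (d : V)

/-- `vtx (i + 1) = rep l[i]` and `leaf (i + 1) = leafOf l[i]`, with no end leaves; `d` only
fills the indices outside `1, …, l.length`. -/
def caterpillarOf : Caterpillar V where
  p := l.length
  vtx i := rep (l.getD (i - 1) d)
  leaf
    | 0 => none
    | i + 1 => l[i]?.bind leafOf

variable {rep leafOf l d}

lemma caterpillarOf_vtx {i : ℕ} (hi : i < l.length) :
    (caterpillarOf rep leafOf l d).vtx (i + 1) = rep l[i] := by
  simp [caterpillarOf, hi]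

lemma caterpillarOf_leaf_eq_some {i : ℕ} {w : V}
    (h : (caterpillarOf rep leafOf l d).leaf i = some w) :
    ∃ j, ∃ hj : j < l.length, i = j + 1 ∧ leafOf l[j] = some w := by
  rcases i with _ | j
  · simp [caterpillarOf] at h
  · rcases hj : l[j]? with _ | a
    · simp [caterpillarOf, hj] at h
    · obtain ⟨hjl, rfl⟩ := List.getElem?_eq_some_iff.1 hj
      exact ⟨j, hjl, rfl, by simpa [caterpillarOf, hj] using h⟩

lemma mem_leaves_caterpillarOf {a w : V} (ha : a ∈ l) (hw : leafOf a = some w) :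
    w ∈ (caterpillarOf rep leafOf l d).leaves := by
  obtain ⟨j, hj, rfl⟩ := List.getElem_of_mem ha
  exact ⟨j + 1, by simp [caterpillarOf]; omega, by simp [caterpillarOf, hj, hw]⟩

lemma sum_caterpillarOf_leaf [DecidableEq V] (hl : l.Nodup) (g : V → ℝ) :
    ∑ i ∈ Finset.range ((caterpillarOf rep leafOf l d).p + 2),
        ((caterpillarOf rep leafOf l d).leaf i).elim 0 g =
      ∑ a ∈ l.toFinset, (leafOf a).elim 0 g := by
  have hlist : ∀ l : List V, ∑ i ∈ Finset.range l.length, (l[i]?.bind leafOf).elim 0 g =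
      (l.map fun a => (leafOf a).elim 0 g).sum := by
    intro l
    induction l with
    | nil => simp
    | cons a t ih => simp [Finset.sum_range_succ', ih, add_comm]
  rw [Finset.sum_range_succ', Finset.sum_range_succ, List.sum_toFinset _ hl, ← hlist]
  simp [caterpillarOf]

theorem isCaterpillar_caterpillarOf [DecidableEq V] {G : SimpleGraph V} {L : V → ℕ} {y : V → ℝ}
    {δ : ℕ} (hnd : l.Nodup) (hrep_inj : ∀ a ∈ l, ∀ b ∈ l, rep a = rep b → a = b)
    (hrep : ∀ a ∈ l, y (rep a) = 1) (hchain : l.IsChain fun a b => G.dist (rep a) (rep b) ≤ δ)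
    (hleaf : ∀ a ∈ l, ∀ w, leafOf a = some w →
      L w ≤ L (rep a) ∧ 0 < y w ∧ y w < 1 ∧ G.dist (rep a) w ≤ δ)
    (hleaf_inj : ∀ a ∈ l, ∀ b ∈ l, ∀ w, leafOf a = some w → leafOf b = some w → a = b)
    (hint : ∃ n : ℤ, ∑ a ∈ l.toFinset, (leafOf a).elim 0 y = n) :
    IsCaterpillar G L y δ (caterpillarOf rep leafOf l d) := by
  have hp : (caterpillarOf rep leafOf l d).p = l.length := rfl
  have hspine : ∀ w ∈ (caterpillarOf rep leafOf l d).spine, y w = 1 := by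
    rintro w ⟨_ | i, hi, hip, rfl⟩
    · omega
    · rw [caterpillarOf_vtx hip]; exact hrep _ (List.getElem_mem _)
  refine ⟨?_, ?_, ?_, ?_, ?_, ?_, ?_, ?_, ?_⟩
  · rintro (_ | i) (_ | j) hi hij hj h <;> try omega
    rw [caterpillarOf_vtx (by omega : i < l.length), caterpillarOf_vtx (by omega : j < l.length)] at h
    have := (hnd.getElem_inj_iff).1
      (hrep_inj _ (List.getElem_mem _) _ (List.getElem_mem _) h)
    omega
  · rintro (_ | i) hi hip
    · omega
    · rw [caterpillarOf_vtx (by omega)]; exact hrep _ (List.getElem_mem _)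
  · rintro (_ | i) hi hip
    · omega
    · rw [caterpillarOf_vtx (by omega : i < l.length),
        caterpillarOf_vtx (by omega : i + 1 < l.length)]
      exact List.isChain_iff_getElem.1 hchain i (by omega)
  · intro i _ w hw hws
    obtain ⟨j, hj, rfl, hjw⟩ := caterpillarOf_leaf_eq_some hw
    linarith [hspine w hws, (hleaf _ (List.getElem_mem _) w hjw).2.2.1]
  · intro i _ _ w hw
    obtain ⟨j, hj, rfl, hjw⟩ := caterpillarOf_leaf_eq_some hw
    rw [caterpillarOf_vtx hj]
    exact hleaf _ (List.getElem_mem _) w hjw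
  · simp [caterpillarOf]
  · intro w hw
    obtain ⟨j, hj, hpj, -⟩ := caterpillarOf_leaf_eq_some hw
    omega
  · rintro i j hij - w w' hw hw' rfl
    obtain ⟨i, hi, rfl, hiw⟩ := caterpillarOf_leaf_eq_some hw
    obtain ⟨j, hj, rfl, hjw⟩ := caterpillarOf_leaf_eq_some hw'
    have := (hnd.getElem_inj_iff).1
      (hleaf_inj _ (List.getElem_mem _) _ (List.getElem_mem _) w hiw hjw)
    omega
  · rw [sum_caterpillarOf_leaf hnd]; exact hint

end CaterpillarOf

lemma exists_int_sum_eq {ι : Type*} {s : Finset ι} {f : ι → ℝ} (h : ∀ i ∈ s, ∃ n : ℤ, f i = n) :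
    ∃ n : ℤ, ∑ i ∈ s, f i = n := by
  choose! n hn using h
  exact ⟨∑ i ∈ s, n i, by push_cast; exact Finset.sum_congr rfl hn⟩

lemma exists_int_eq_of_notMem_Ioo {t : ℝ} (h0 : 0 ≤ t) (h1 : t ≤ 1) (h : t ∉ Set.Ioo 0 1) :
    ∃ n : ℤ, t = n := by
  rcases h0.eq_or_lt with h0 | h0
  · exact ⟨0, by simp [← h0]⟩
  · exact ⟨1, by simp [le_antisymm h1 (not_lt.1 fun h1 => h ⟨h0, h1⟩)]⟩

section Fractional

variable {V : Type} [Fintype V] [DecidableEq V] (ctr : V → V) (g : V → ℝ)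

noncomputable def cellFrac (s : V) : Option V :=
  (cell ctr s).toList.find? fun v => decide (g v ∈ Set.Ioo 0 1)

variable {ctr g}

lemma cellFrac_eq_some {s w : V} (h : cellFrac ctr g s = some w) :
    ctr w = s ∧ g w ∈ Set.Ioo 0 1 := by
  have h' : (cell ctr s).toList.find? (fun v => decide (g v ∈ Set.Ioo 0 1)) = some w := h
  exact ⟨mem_cell.1 (Finset.mem_toList.1 (List.mem_of_find?_eq_some h')),
    by simpa using List.find?_some h'⟩

lemma cellFrac_eq_some_of {w : V} (huniq : ∀ v, ctr v = ctr w → g v ∈ Set.Ioo 0 1 → v = w)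
    (hw : g w ∈ Set.Ioo 0 1) : cellFrac ctr g (ctr w) = some w := by
  rcases h : cellFrac ctr g (ctr w) with _ | w'
  · have := List.find?_eq_none.1 h w (Finset.mem_toList.2 (mem_cell.2 rfl))
    simp [hw] at this
  · obtain ⟨hw', hfrac⟩ := cellFrac_eq_some h
    rw [huniq w' hw' hfrac]

lemma exists_int_cellSum_eq (hg0 : ∀ v, 0 ≤ g v) (hg1 : ∀ v, g v ≤ 1)
    (huniq : ∀ v w, ctr v = ctr w → g v ∈ Set.Ioo 0 1 → g w ∈ Set.Ioo 0 1 → v = w) (s : V) :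
    ∃ n : ℤ, cellSum ctr g s = (cellFrac ctr g s).elim 0 g + n := by
  have hsplit : cellSum ctr g s = ∑ v ∈ cell ctr s, (if g v ∈ Set.Ioo 0 1 then g v else 0) +
      ∑ v ∈ cell ctr s, (if g v ∈ Set.Ioo 0 1 then 0 else g v) := by
    rw [cellSum, ← Finset.sum_add_distrib]
    exact Finset.sum_congr rfl fun v _ => by split_ifs <;> simp
  have hfrac : ∑ v ∈ cell ctr s, (if g v ∈ Set.Ioo 0 1 then g v else 0)
      = (cellFrac ctr g s).elim 0 g := by
    rcases h : cellFrac ctr g s with _ | w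
    · refine Finset.sum_eq_zero fun v hv => if_neg fun hv' => ?_
      simpa [hv'] using List.find?_eq_none.1 h v (Finset.mem_toList.2 hv)
    · obtain ⟨hw, hwfrac⟩ := cellFrac_eq_some h
      rw [Finset.sum_eq_single_of_mem w (mem_cell.2 hw) fun v hv hvw =>
        if_neg fun hv' => hvw (huniq v w ((mem_cell.1 hv).trans hw.symm) hv' hwfrac)]
      simp [hwfrac]
  obtain ⟨n, hn⟩ := exists_int_sum_eq (s := cell ctr s)
      (f := fun v => if g v ∈ Set.Ioo 0 1 then 0 else g v) fun v _ => by
    split_ifs with hv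
    · exact ⟨0, by simp⟩
    · exact exists_int_eq_of_notMem_Ioo (hg0 v) (hg1 v) hv
  exact ⟨n, by rw [hsplit, hfrac, hn]⟩

lemma IsClustering.sum_cellSum {G : SimpleGraph V} {S : Finset V} (hC : IsClustering G S ctr)
    (f : V → ℝ) : ∑ s ∈ S, cellSum ctr f s = ∑ v, f v := by
  rw [← sum_univ_cellSum]
  refine Finset.sum_subset (Finset.subset_univ S) fun s _ hs => Finset.sum_eq_zero fun v hv => ?_
  exact absurd (mem_cell.1 hv ▸ hC.ctr_mem v) hs

lemma IsClustering.exists_int_sum_cellFrac {G : SimpleGraph V} {S : Finset V}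
    (hC : IsClustering G S ctr) (hg0 : ∀ v, 0 ≤ g v) (hg1 : ∀ v, g v ≤ 1)
    (huniq : ∀ v w, ctr v = ctr w → g v ∈ Set.Ioo 0 1 → g w ∈ Set.Ioo 0 1 → v = w)
    (hint : ∃ n : ℤ, ∑ v, g v = n) : ∃ n : ℤ, ∑ s ∈ S, (cellFrac ctr g s).elim 0 g = n := by
  choose n hn using exists_int_cellSum_eq hg0 hg1 huniq
  obtain ⟨m, hm⟩ := hint
  refine ⟨m - ∑ s ∈ S, n s, ?_⟩
  rw [Int.cast_sub, ← hm, ← hC.sum_cellSum, Int.cast_sum, ← Finset.sum_sub_distrib]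
  exact Finset.sum_congr rfl fun s _ => by rw [hn s]; ring

end Fractional

section Assembly

variable {V : Type} [Fintype V] [DecidableEq V] {G : SimpleGraph V} {S : Finset V} {ctr : V → V}

lemma IsClustering.lpFeasible_reassign (hC : IsClustering G S ctr) (hG : G.Connected)
    {L : V → ℕ} {k : ℕ} {x : V → V → ℝ} {y : V → ℝ} (hfeas : LPFeasible G L k 1 x y) :
    LPFeasible G L k 5 (reassign ctr L x (roundedOpening L ctr y)) (roundedOpening L ctr y) := by
  obtain ⟨-, hy0, hysum, -, -, -, hy1, -⟩ := id hfeas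
  refine hfeas.reassign (D := 4) hG roundedOpening_nonneg roundedOpening_le_one
    (by rw [sum_roundedOpening hy0 hy1, hysum]) (cellSum_mul_le_roundedOpening hy0 hy1)
    (fun u => ?_) fun u w => hC.dist_le_four hG
  have hu := hC.ctr_mem u
  exact le_cellSum_mul_roundedOpening (hC.ctr_self hu) (hC.one_le_cellSum hfeas hu) rfl

theorem IsClustering.isCaterpillar (hC : IsClustering G S ctr) (hG : G.Connected) {L : V → ℕ}
    {y : V → ℝ} (hy0 : ∀ v, 0 ≤ y v) (hy1 : ∀ v, y v ≤ 1) (hmass : ∀ s ∈ S, 1 ≤ cellSum ctr y s)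
    (hint : ∃ n : ℤ, ∑ v, y v = n) {l : List V} (hnd : l.Nodup) (hlS : l.toFinset = S)
    (hchain : l.IsChain fun a b => G.dist a b ≤ 15) (d : V) :
    IsCaterpillar G L (roundedOpening L ctr y) 21
      (caterpillarOf (cellHead L ctr) (cellFrac ctr (roundedOpening L ctr y)) l d) := by
  have hS : ∀ a ∈ l, a ∈ S := fun a ha => hlS ▸ List.mem_toFinset.2 ha
  have hfix : ∀ a ∈ l, ctr a = a := fun a ha => hC.ctr_self (hS a ha)
  have hhead : ∀ a ∈ l, G.dist (cellHead L ctr a) a ≤ 2 := fun a ha => by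
    simpa [ctr_cellHead (hfix a ha)] using hC.dist_ctr_le (cellHead L ctr a)
  have huniq : ∀ v w, ctr v = ctr w → roundedOpening L ctr y v ∈ Set.Ioo 0 1 →
      roundedOpening L ctr y w ∈ Set.Ioo 0 1 → v = w := fun _ _ => eq_of_roundedOpening_mem_Ioo
  refine isCaterpillar_caterpillarOf hnd (fun a ha b hb h => ?_)
    (fun a ha => roundedOpening_cellHead (hfix a ha) (hmass a (hS a ha)))
    (hchain.imp_of_mem_imp fun a b ha hb hab => ?_) (fun a ha w hw => ?_)
    (fun a _ b _ w hwa hwb => (cellFrac_eq_some hwa).1.symm.trans (cellFrac_eq_some hwb).1) ?_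
  · rw [← ctr_cellHead (L := L) (hfix a ha), h, ctr_cellHead (hfix b hb)]
  · have := hG.dist_triangle (u := cellHead L ctr a) (v := a) (w := cellHead L ctr b)
    have := hG.dist_triangle (u := a) (v := b) (w := cellHead L ctr b)
    linarith [hhead a ha, hhead b hb, G.dist_comm (u := b) (v := cellHead L ctr b)]
  · obtain ⟨hwa, hfrac⟩ := cellFrac_eq_some hw
    refine ⟨le_cellHead (hfix a ha) hwa, hfrac.1, hfrac.2, ?_⟩
    linarith [hC.dist_le_four hG ((ctr_cellHead (L := L) (hfix a ha)).trans hwa.symm)]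
  · rw [← hlS] at hC
    exact hC.exists_int_sum_cellFrac roundedOpening_nonneg roundedOpening_le_one huniq
      (sum_roundedOpening hy0 hy1 ▸ hint)

end Assembly

theorem caterpillar_existence_general {V : Type} [Fintype V] (G : SimpleGraph V)
    (hG : G.Connected) (L : V → ℕ) (k : ℕ)
    (x : V → V → ℝ) (y : V → ℝ) (hfeas : LPFeasible G L k 1 x y) :
    ∃ (x' : V → V → ℝ) (y' : V → ℝ) (C : Caterpillar V),
      LPFeasible G L k 5 x' y' ∧
      IsCaterpillar G L y' 21 C ∧
      (∀ v : V, v ∉ C.spine → v ∉ C.leaves → ∃ n : ℤ, y' v = (n : ℝ)) ∧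
      C.leaf 0 = none ∧ C.leaf (C.p + 1) = none := by
  classical
  obtain ⟨S, ctr, hC⟩ := hG.exists_isClustering
  obtain ⟨-, hy0, hysum, -, -, -, hy1, -⟩ := id hfeas
  obtain ⟨l, hnd, hlS, hchain⟩ := hC.exists_list hG
  refine ⟨_, _, caterpillarOf (cellHead L ctr) (cellFrac ctr (roundedOpening L ctr y)) l
      hG.nonempty.some, hC.lpFeasible_reassign hG hfeas,
    hC.isCaterpillar hG hy0 hy1 (fun s hs => hC.one_le_cellSum hfeas hs) ⟨k, by simpa using hysum⟩
      hnd hlS hchain _, fun v _ hv => ?_, rfl, by simp [caterpillarOf]⟩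
  refine exists_int_eq_of_notMem_Ioo (roundedOpening_nonneg v) (roundedOpening_le_one v)
    fun hfrac => hv (mem_leaves_caterpillarOf (a := ctr v) ?_ (cellFrac_eq_some_of ?_ hfrac))
  · exact List.mem_toFinset.1 (hlS ▸ hC.ctr_mem v)
  · exact fun w hw hwfrac => eq_of_roundedOpening_mem_Ioo hw hwfrac hfrac

/-- **Lemma 5.** For every finite connected graph `G`, capacity function
`L`, positive integer `k` and feasible LP1 solution `(x, y)`, there are a `5`-feasible
assignment `(x', y')` and a `21`-caterpillar structure `(P, P')` for `(x', y')` such that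
every vertex outside `V(P) ∪ V(P')` has an integral `y'`-value and the first and last
entries of `P'` are `nil`. -/
theorem caterpillar_existence {V : Type} [Fintype V] (G : SimpleGraph V)
    (hG : G.Connected) (L : V → ℕ) (k : ℕ) (hk : 0 < k)
    (x : V → V → ℝ) (y : V → ℝ) (hfeas : LPFeasible G L k 1 x y) :
    ∃ (x' : V → V → ℝ) (y' : V → ℝ) (C : Caterpillar V),
      LPFeasible G L k 5 x' y' ∧
      IsCaterpillar G L y' 21 C ∧
      (∀ v : V, v ∉ C.spine → v ∉ C.leaves → ∃ n : ℤ, y' v = (n : ℝ)) ∧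
      C.leaf 0 = none ∧ C.leaf (C.p + 1) = none :=
  caterpillar_existence_general G hG L k x y hfeas
end

section
/- Let P = ((v_1, …, v_p), (v'_0, …, v'_{p+1})) be a dangerous caterpillar structure for an assignment (x, y), let i be an index with v_i ∈ Γ(P) and L(v_i) = min_{v ∈ Γ(P)} L(v), and let j be an index with v'_j ≠ nil and L(v'_j) > L(v_i). Then for every index a with min(i, j) ≤ a ≤ max(i, j) and 1 ≤ a ≤ p, we have L(v_a) ≥ L(v_i). -/
/-!
Suppose some spine vertex `v_a` between `v_i` and `v'_j` had `L(v_a) < L(v_i)`.  It is not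
`v_j` itself, since a leaf never has larger capacity than its own spine vertex.  So `v_a`
lies strictly between `v'_j` and one of the two leaves witnessing `v_i ∈ Γ(P)`; both have
capacity above `L(v_i) > L(v_a)`, hence `v_a ∈ Γ(P)`, against the minimality of `L(v_i)`.
-/

namespace IsCaterpillar

variable {V : Type} {G : SimpleGraph V} {L : V → ℕ} {y : V → ℝ} {δ : ℕ} {C : Caterpillar V}

theorem vtx_injOn (hC : IsCaterpillar G L y δ C) {i i' : ℕ} (hi1 : 1 ≤ i) (hip : i ≤ C.p)
    (hi'1 : 1 ≤ i') (hi'p : i' ≤ C.p) (h : C.vtx i' = C.vtx i) : i' = i := by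
  rcases lt_trichotomy i' i with hlt | heq | hgt
  · exact absurd h (hC.1 i' i hi'1 hlt hip)
  · exact heq
  · exact absurd h.symm (hC.1 i i' hi1 hgt hi'p)

theorem capacity_leaf_le (hC : IsCaterpillar G L y δ C) {a : ℕ} (ha1 : 1 ≤ a) (hap : a ≤ C.p)
    {w : V} (hw : C.leaf a = some w) : L w ≤ L (C.vtx a) :=
  (hC.2.2.2.2.1 a ha1 hap w hw).1

/-- Spine vertices are distinct, so the index in `Γ`'s definition is the given one. -/
theorem exists_leaves_of_vtx_mem_Gamma (hC : IsCaterpillar G L y δ C) {i : ℕ} (hi1 : 1 ≤ i)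
    (hip : i ≤ C.p) (hiΓ : C.vtx i ∈ Gamma L C) :
    ∃ i₀ i₁, i₀ < i ∧ i < i₁ ∧ i₁ ≤ C.p + 1 ∧
      (∃ w₀, C.leaf i₀ = some w₀ ∧ L (C.vtx i) < L w₀) ∧
      (∃ w₁, C.leaf i₁ = some w₁ ∧ L (C.vtx i) < L w₁) := by
  obtain ⟨i', hi'1, hi'p, heq, rest⟩ := hiΓ
  obtain rfl := hC.vtx_injOn hi1 hip hi'1 hi'p heq
  exact rest

end IsCaterpillar

theorem vtx_mem_Gamma {V : Type} {L : V → ℕ} {C : Caterpillar V} {a i₀ i₁ : ℕ}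
    (ha1 : 1 ≤ a) (hap : a ≤ C.p) (h₀ : i₀ < a) (h₁ : a < i₁) (hi₁ : i₁ ≤ C.p + 1)
    {w₀ w₁ : V} (hw₀ : C.leaf i₀ = some w₀) (hw₁ : C.leaf i₁ = some w₁)
    (hL₀ : L (C.vtx a) < L w₀) (hL₁ : L (C.vtx a) < L w₁) : C.vtx a ∈ Gamma L C :=
  ⟨a, ha1, hap, rfl, i₀, i₁, h₀, h₁, hi₁, ⟨w₀, hw₀, hL₀⟩, ⟨w₁, hw₁, hL₁⟩⟩

theorem gamma_interval_capacity_general {V : Type} (G : SimpleGraph V)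
    (L : V → ℕ) (y : V → ℝ) (δ : ℕ)
    (C : Caterpillar V) (hcat : IsCaterpillar G L y δ C)
    (i : ℕ) (hi1 : 1 ≤ i) (hip : i ≤ C.p)
    (hiΓ : C.vtx i ∈ Gamma L C) (hmin : ∀ w ∈ Gamma L C, L (C.vtx i) ≤ L w)
    (j : ℕ) (hj : j ≤ C.p + 1) (w' : V) (hw' : C.leaf j = some w')
    (hLw' : L (C.vtx i) < L w') :
    ∀ a, min i j ≤ a → a ≤ max i j → 1 ≤ a → a ≤ C.p → L (C.vtx i) ≤ L (C.vtx a) := by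
  intro a hmina hmaxa ha1 hap
  obtain ⟨i₀, i₁, hi₀, hi₁, hi₁p, ⟨w₀, hw₀, hL₀⟩, ⟨w₁, hw₁, hL₁⟩⟩ :=
    hcat.exists_leaves_of_vtx_mem_Gamma hi1 hip hiΓ
  by_contra! hlt
  have ha_ne_j : a ≠ j := by
    rintro rfl
    have := hcat.capacity_leaf_le ha1 hap hw'
    omega
  have ha_ne_i : a ≠ i := by rintro rfl; omega
  have haΓ : C.vtx a ∈ Gamma L C := by
    rcases (show (i < a ∧ a < j) ∨ (j < a ∧ a < i) by omega) with ⟨hia, haj⟩ | ⟨hja, hai⟩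
    · exact vtx_mem_Gamma ha1 hap (hi₀.trans hia) haj hj hw₀ hw' (by omega) (by omega)
    · exact vtx_mem_Gamma ha1 hap hja (hai.trans hi₁) hi₁p hw' hw₁ (by omega) (by omega)
  exact (hmin _ haΓ).not_gt hlt

/-- **Lemma 6.** Let `C` be a dangerous caterpillar structure, let `i` be
an index with `vtx i ∈ Γ(C)` of minimum capacity in `Γ(C)`, and let `j` be an index whose
leaf `leaf j` is non-nil with capacity larger than `L (vtx i)`.  Then every spine vertex
`vtx a` with `min i j ≤ a ≤ max i j` satisfies `L (vtx i) ≤ L (vtx a)`. -/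
theorem gamma_interval_capacity {V : Type} [Fintype V] (G : SimpleGraph V)
    (hG : G.Connected) (L : V → ℕ) (y : V → ℝ) (δ : ℕ) (hδ : 0 < δ)
    (C : Caterpillar V) (hcat : IsCaterpillar G L y δ C)
    (i : ℕ) (hi1 : 1 ≤ i) (hip : i ≤ C.p)
    (hiΓ : C.vtx i ∈ Gamma L C) (hmin : ∀ w ∈ Gamma L C, L (C.vtx i) ≤ L w)
    (j : ℕ) (hj : j ≤ C.p + 1) (w' : V) (hw' : C.leaf j = some w')
    (hLw' : L (C.vtx i) < L w') :
    ∀ a, min i j ≤ a → a ≤ max i j → 1 ≤ a → a ≤ C.p → L (C.vtx i) ≤ L (C.vtx a) :=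
  gamma_interval_capacity_general G L y δ C hcat i hi1 hip hiΓ hmin j hj w' hw' hLw'
end

section
/- Let P = ((v_1, …, v_p), (v'_0, …, v'_{p+1})) be a dangerous non-separable caterpillar structure for an assignment (x, y), let ℓ = min_{v ∈ Γ(P)} L(v), and let I = { i : 0 ≤ i ≤ p+1, v'_i ≠ nil and L(v'_i) > ℓ }. Then ∑_{i ∈ I} (1 − y_{v'_i}) < 2. -/
/-- A dangerous caterpillar structure `C` is separable if there is an index `i` with
`vtx i ∈ Γ(C)` of minimum capacity in `Γ(C)` such that, on the right side
(indices `i < j ≤ p + 1`) or on the left side (indices `0 ≤ j < i`),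
`S₁ ≥ ⌈S₂⌉ - S₂`, where `S₂` is the sum of the `y`-values of the non-nil leaves on that
side and `S₁` is the sum of `1 - y w` over the non-nil leaves `w` on that side with
`L w > L (vtx i)`. -/
def Separable {V : Type} (L : V → ℕ) (y : V → ℝ) (C : Caterpillar V) : Prop :=
  ∃ i, 1 ≤ i ∧ i ≤ C.p ∧ C.vtx i ∈ Gamma L C ∧
    (∀ w ∈ Gamma L C, L (C.vtx i) ≤ L w) ∧
    (((⌈∑ j ∈ Finset.Icc (i + 1) (C.p + 1), (C.leaf j).elim 0 y⌉ : ℝ) -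
        ∑ j ∈ Finset.Icc (i + 1) (C.p + 1), (C.leaf j).elim 0 y ≤
        ∑ j ∈ Finset.Icc (i + 1) (C.p + 1),
          (C.leaf j).elim 0 (fun w => if L (C.vtx i) < L w then 1 - y w else 0)) ∨
     ((⌈∑ j ∈ Finset.range i, (C.leaf j).elim 0 y⌉ : ℝ) -
        ∑ j ∈ Finset.range i, (C.leaf j).elim 0 y ≤
        ∑ j ∈ Finset.range i,
          (C.leaf j).elim 0 (fun w => if L (C.vtx i) < L w then 1 - y w else 0)))

/-!
Take a spine index `i` with `v_i ∈ Γ(P)` of minimum capacity `ℓ`. Non-separability at `i`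
says that on each side of `i` the excess `∑ (1 - y)` over leaves of capacity `> ℓ` is below
`⌈S₂⌉ - S₂ < 1`, while the leaf `v'_i` itself has capacity `≤ L(v_i) = ℓ` and contributes
nothing. Hence the total excess is below `1 + 0 + 1`.
-/

open Finset

theorem Finset.sum_range_succ_eq_sum_range_add_add_sum_Icc {M : Type*} [AddCommMonoid M]
    (f : ℕ → M) {i n : ℕ} (hin : i ≤ n) :
    ∑ j ∈ range (n + 1), f j = ∑ j ∈ range i, f j + (f i + ∑ j ∈ Icc (i + 1) n, f j) := by
  rw [← Ico_add_one_right_eq_Icc, range_eq_Ico, range_eq_Ico,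
    ← sum_Ico_consecutive f (Nat.zero_le i) (by omega : i ≤ n + 1),
    sum_eq_sum_Ico_succ_bot (by omega : i < n + 1)]

namespace Caterpillar

variable {V : Type} (L : V → ℕ) (y : V → ℝ) (C : Caterpillar V)

def excess (ℓ j : ℕ) : ℝ :=
  (C.leaf j).elim 0 (fun w => if ℓ < L w then 1 - y w else 0)

variable {L y C}

theorem excess_eq_zero_of_spine {G : SimpleGraph V} {δ : ℕ} (hcat : IsCaterpillar G L y δ C)
    {i ℓ : ℕ} (hi : 1 ≤ i) (hip : i ≤ C.p) (hℓ : L (C.vtx i) ≤ ℓ) :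
    C.excess L y ℓ i = 0 := by
  unfold excess
  cases hleaf : C.leaf i with
  | none => rfl
  | some w =>
    have hw : L w ≤ L (C.vtx i) := (hcat.2.2.2.2.1 i hi hip w hleaf).1
    simp [show ¬ ℓ < L w by omega]

theorem excess_sums_lt_one_of_not_separable (hnsep : ¬ Separable L y C) {i : ℕ}
    (hi : 1 ≤ i) (hip : i ≤ C.p) (hΓ : C.vtx i ∈ Gamma L C)
    (hmin : ∀ w ∈ Gamma L C, L (C.vtx i) ≤ L w) :
    ∑ j ∈ range i, C.excess L y (L (C.vtx i)) j < 1 ∧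
      ∑ j ∈ Icc (i + 1) (C.p + 1), C.excess L y (L (C.vtx i)) j < 1 := by
  obtain ⟨hright, hleft⟩ := not_or.mp fun h => hnsep ⟨i, hi, hip, hΓ, hmin, h⟩
  rw [not_le] at hright hleft
  simp only [excess]
  constructor
  · linarith [Int.ceil_lt_add_one (∑ j ∈ range i, (C.leaf j).elim 0 y)]
  · linarith [Int.ceil_lt_add_one (∑ j ∈ Icc (i + 1) (C.p + 1), (C.leaf j).elim 0 y)]

end Caterpillar

theorem dangerous_nonseparable_bound_general {V : Type} (G : SimpleGraph V)
    (L : V → ℕ) (y : V → ℝ) (δ : ℕ)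
    (C : Caterpillar V) (hcat : IsCaterpillar G L y δ C)
    (hnsep : ¬ Separable L y C)
    (ℓ : ℕ) (hℓmem : ∃ w ∈ Gamma L C, L w = ℓ) (hℓmin : ∀ w ∈ Gamma L C, ℓ ≤ L w) :
    ∑ i ∈ Finset.range (C.p + 2),
        (C.leaf i).elim 0 (fun w => if ℓ < L w then 1 - y w else 0) < 2 := by
  obtain ⟨w, hwΓ, rfl⟩ := hℓmem
  obtain ⟨i, hi, hip, rfl, -⟩ := id hwΓ
  obtain ⟨hleft, hright⟩ :=
    Caterpillar.excess_sums_lt_one_of_not_separable hnsep hi hip hwΓ hℓmin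
  have hmid := Caterpillar.excess_eq_zero_of_spine hcat hi hip le_rfl
  change ∑ j ∈ range (C.p + 1 + 1), C.excess L y (L (C.vtx i)) j < 2
  rw [sum_range_succ_eq_sum_range_add_add_sum_Icc _ (by omega : i ≤ C.p + 1), hmid]
  linarith

/-- **Lemma 7.** Let `C` be a dangerous non-separable caterpillar
structure, let `ℓ` be the minimum capacity of a vertex of `Γ(C)` and let `I` be the set of
indices `i ≤ p + 1` whose leaf is non-nil of capacity larger than `ℓ`.  Then
`∑_{i ∈ I} (1 - y (leaf i)) < 2`. -/
theorem dangerous_nonseparable_bound {V : Type} [Fintype V] (G : SimpleGraph V)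
    (hG : G.Connected) (L : V → ℕ) (y : V → ℝ) (δ : ℕ) (hδ : 0 < δ)
    (C : Caterpillar V) (hcat : IsCaterpillar G L y δ C)
    (hdang : (Gamma L C).Nonempty) (hnsep : ¬ Separable L y C)
    (ℓ : ℕ) (hℓmem : ∃ w ∈ Gamma L C, L w = ℓ) (hℓmin : ∀ w ∈ Gamma L C, ℓ ≤ L w) :
    ∑ i ∈ Finset.range (C.p + 2),
        (C.leaf i).elim 0 (fun w => if ℓ < L w then 1 - y w else 0) < 2 :=
  dangerous_nonseparable_bound_general G L y δ C hcat hnsep ℓ hℓmem hℓmin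
end
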